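/- arXiv:1407.3197 — 2 statements merged into one kernel-verified Lean document; each statement's English description precedes it below -/
import Mathlib

section
/- Invertibility of the 2×2 block saddle-point matrix: if A is a symmetric positive definite n×n real matrix, C is a symmetric positive semidefinite m×m real matrix, and ker C ∩ ker B = {0} where B is an n×m real matrix, then the (n+m)×(n+m) block matrix M = [[A, B],[Bᵀ, −C]] is invertible. -/
/-!
Pairing `M (x, y)` with `(x, -y)` makes the off-diagonal blocks cancel and leaves
`xᵀ A x + yᵀ C y`. If `M (x, y) = 0` this vanishes, so definiteness of `A` forces `x = 0`
and semidefiniteness of `C` forces `C y = 0`; the first block row then reads `B y = 0`,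
and the kernel condition gives `y = 0`.
-/

open Matrix

variable {n m : Type*} [Fintype n] [Fintype m]

lemma Matrix.sumElim_neg_dotProduct_fromBlocks_mulVec (A : Matrix n n ℝ) (B : Matrix n m ℝ)
    (C : Matrix m m ℝ) (x : n → ℝ) (y : m → ℝ) :
    Sum.elim x (-y) ⬝ᵥ (fromBlocks A B Bᵀ (-C) *ᵥ Sum.elim x y) = x ⬝ᵥ A *ᵥ x + y ⬝ᵥ C *ᵥ y := by
  have hB : y ⬝ᵥ Bᵀ *ᵥ x = x ⬝ᵥ B *ᵥ y := by
    rw [mulVec_transpose, dotProduct_mulVec, dotProduct_comm]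
  simp only [fromBlocks_mulVec, Sum.elim_comp_inl, Sum.elim_comp_inr, sumElim_dotProduct_sumElim,
    dotProduct_add, neg_mulVec, dotProduct_neg, neg_dotProduct, hB]
  ring

lemma Matrix.PosDef.eq_zero_and_mulVec_eq_zero_of_dotProduct_add_eq_zero {A : Matrix n n ℝ}
    {C : Matrix m m ℝ} (hA : A.PosDef) (hC : C.PosSemidef) {x : n → ℝ} {y : m → ℝ}
    (h : x ⬝ᵥ A *ᵥ x + y ⬝ᵥ C *ᵥ y = 0) : x = 0 ∧ C *ᵥ y = 0 := by
  have hCy : 0 ≤ y ⬝ᵥ C *ᵥ y := hC.dotProduct_mulVec_nonneg y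
  have hx : x = 0 := by
    by_contra hx
    have hAx : 0 < x ⬝ᵥ A *ᵥ x := hA.dotProduct_mulVec_pos hx
    linarith
  refine ⟨hx, (hC.dotProduct_mulVec_zero_iff y).mp ?_⟩
  simpa [hx] using h

lemma Matrix.eq_zero_of_fromBlocks_mulVec_eq_zero {A : Matrix n n ℝ} {B : Matrix n m ℝ}
    {C : Matrix m m ℝ} (hA : A.PosDef) (hC : C.PosSemidef)
    (hker : ∀ z : m → ℝ, C *ᵥ z = 0 → B *ᵥ z = 0 → z = 0) {v : n ⊕ m → ℝ}
    (hv : fromBlocks A B Bᵀ (-C) *ᵥ v = 0) : v = 0 := by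
  obtain ⟨x, y, rfl⟩ : ∃ x y, v = Sum.elim x y := ⟨v ∘ Sum.inl, v ∘ Sum.inr, by simp⟩
  obtain ⟨rfl, hCy⟩ := hA.eq_zero_and_mulVec_eq_zero_of_dotProduct_add_eq_zero hC <| by
    rw [← sumElim_neg_dotProduct_fromBlocks_mulVec, hv, dotProduct_zero]
  have hBy : B *ᵥ y = 0 := funext fun i ↦ by
    simpa [fromBlocks_mulVec] using congrFun hv (Sum.inl i)
  simp [hker y hCy hBy]

theorem saddle_point_invertible {n m : ℕ}
    (A : Matrix (Fin n) (Fin n) ℝ) (B : Matrix (Fin n) (Fin m) ℝ)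
    (C : Matrix (Fin m) (Fin m) ℝ)
    (hA : A.PosDef) (hC : C.PosSemidef)
    (hker : ∀ z : Fin m → ℝ, C.mulVec z = 0 → B.mulVec z = 0 → z = 0) :
    IsUnit (Matrix.fromBlocks A B B.transpose (-C)) := by
  rw [← mulVec_injective_iff_isUnit]
  exact (injective_iff_map_eq_zero (mulVecLin _)).2 fun _ ↦
    eq_zero_of_fromBlocks_mulVec_eq_zero hA hC hker
end

section
/- Invertibility of the discretized electric Hessian: if A is symmetric positive definite, C̃ is symmetric positive definite, and B₂ has trivial kernel, then the block matrix M = [[A, B₁, B₂],[B₁ᵀ, −C̃, 0],[B₂ᵀ, 0, 0]] is invertible. -/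
/-!
If `M (x, y) = 0` for `M = [[A, B], [Bᵀ, -D]]`, then `Ax = -By` and `Bᵀx = Dy`, so
`xᵀAx = -xᵀBy = -yᵀDy ≤ 0` when `D ⪰ 0`. Positivity of `A` forces `x = 0`, and then `By = 0` and
`Dy = 0`. For `B = [B₁ B₂]` and `D = diag(C̃, 0)` this gives `C̃y₁ = 0`, hence `y₁ = 0`, and then
`B₂y₂ = 0`, hence `y₂ = 0`.
-/

namespace Matrix

variable {n m p : Type*} [Fintype n] [Fintype m] [Fintype p]

theorem eq_zero_of_fromBlocks_transpose_neg_mulVec_eq_zero {A : Matrix n n ℝ} {B : Matrix n m ℝ}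
    {D : Matrix m m ℝ} (hA : A.PosDef) (hD : D.PosSemidef) {x : n → ℝ} {y : m → ℝ}
    (h : fromBlocks A B Bᵀ (-D) *ᵥ Sum.elim x y = 0) :
    x = 0 ∧ B *ᵥ y = 0 ∧ D *ᵥ y = 0 := by
  rw [fromBlocks_mulVec, Sum.elim_comp_inl, Sum.elim_comp_inr, neg_mulVec, ← sub_eq_add_neg,
    ← Sum.elim_zero_zero, Sum.elim_eq_iff, sub_eq_zero] at h
  obtain ⟨hAB, hBD⟩ := h
  have hquad : x ⬝ᵥ A *ᵥ x = -(y ⬝ᵥ D *ᵥ y) := by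
    have hxB : x ⬝ᵥ B *ᵥ y = y ⬝ᵥ D *ᵥ y := by
      rw [dotProduct_mulVec, ← mulVec_transpose, hBD, dotProduct_comm]
    rw [← hxB, ← dotProduct_neg, ← eq_neg_of_add_eq_zero_left hAB]
  have hx : x = 0 := by
    by_contra hx
    have hApos := hA.dotProduct_mulVec_pos hx
    have hDnn := hD.dotProduct_mulVec_nonneg y
    simp only [star_trivial] at hApos hDnn
    linarith
  subst hx
  refine ⟨rfl, ?_, ?_⟩
  · simpa using hAB
  · simpa using hBD.symm

theorem isUnit_fromBlocks_transpose_neg [DecidableEq n] [DecidableEq m] {A : Matrix n n ℝ}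
    {B : Matrix n m ℝ} {D : Matrix m m ℝ} (hA : A.PosDef) (hD : D.PosSemidef)
    (hBD : ∀ y, B *ᵥ y = 0 → D *ᵥ y = 0 → y = 0) :
    IsUnit (fromBlocks A B Bᵀ (-D)) := by
  refine mulVec_injective_iff_isUnit.mp ((injective_iff_map_eq_zero (mulVecLin _)).mpr ?_)
  intro v hv
  rw [← Sum.elim_comp_inl_inr v] at hv ⊢
  obtain ⟨hx, hBy, hDy⟩ := eq_zero_of_fromBlocks_transpose_neg_mulVec_eq_zero hA hD hv
  rw [hx, hBD _ hBy hDy, Sum.elim_zero_zero]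

theorem PosDef.posSemidef_fromBlocks_zero [DecidableEq m] {C : Matrix m m ℝ} (hC : C.PosDef) :
    (fromBlocks C 0 0 (0 : Matrix p p ℝ)).PosSemidef := by
  let _ := hC.isUnit.invertible
  simpa using (PosDef.fromBlocks₁₁ 0 (0 : Matrix p p ℝ) hC).mpr (by simpa using PosSemidef.zero)

theorem fromBlocks_zero_mulVec_sumElim {α : Type*} [NonUnitalNonAssocSemiring α]
    (C : Matrix m m α) (y₁ : m → α) (y₂ : p → α) :
    fromBlocks C 0 0 (0 : Matrix p p α) *ᵥ Sum.elim y₁ y₂ = Sum.elim (C *ᵥ y₁) 0 := by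
  simp [fromBlocks_mulVec]

end Matrix

open Matrix

theorem electric_hessian_invertible {n m k : ℕ}
    (A : Matrix (Fin n) (Fin n) ℝ) (C' : Matrix (Fin m) (Fin m) ℝ)
    (B₁ : Matrix (Fin n) (Fin m) ℝ) (B₂ : Matrix (Fin n) (Fin k) ℝ)
    (hA : A.PosDef) (hC' : C'.PosDef)
    (hB₂ : ∀ z : Fin k → ℝ, B₂.mulVec z = 0 → z = 0) :
    IsUnit (Matrix.fromBlocks A (Matrix.fromCols B₁ B₂)
      (Matrix.fromCols B₁ B₂).transpose
      (-(Matrix.fromBlocks C' 0 0 (0 : Matrix (Fin k) (Fin k) ℝ)))) := by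
  refine isUnit_fromBlocks_transpose_neg hA hC'.posSemidef_fromBlocks_zero fun y hBy hDy => ?_
  rw [← Sum.elim_comp_inl_inr y] at hBy hDy ⊢
  rw [fromBlocks_zero_mulVec_sumElim, ← Sum.elim_zero_zero, Sum.elim_eq_iff] at hDy
  have hy₁ : y ∘ Sum.inl = 0 :=
    mulVec_injective_iff_isUnit.mpr hC'.isUnit (hDy.1.trans (mulVec_zero C').symm)
  rw [fromCols_mulVec_sumElim, hy₁, mulVec_zero, zero_add] at hBy
  rw [hy₁, hB₂ _ hBy, Sum.elim_zero_zero]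
end
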